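/- Interpolating S-resolution invariant: if the pair (c^p, I) is derivable from the SSAT formula Q : (A ∧ B) by interpolating S-resolution with Q(c) = Q₁x₁…Qᵢxᵢ, then Var(I) ⊆ V_{A,B}, and for every assignment τ of {x₁,…,xᵢ} falsifying c, both (A ∧ ¬S_{A,B} ∧ ¬I)[τ] and (I ∧ B ∧ ¬S_{A,B})[τ] are unsatisfiable, where S_{A,B} ≡ ∃(V_A ∪ V_B) : (A ∧ B). -/
import Mathlib


/-- A quantifier in an SSAT prefix: existential or randomized with probability `p`. -/
inductive SQ where
  | ex : SQ
  | rand : ℝ → SQ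

/-- Validity of a quantifier: randomized quantifiers carry a probability `0 < p < 1`. -/
def SQ.valid : SQ → Prop
  | SQ.ex => True
  | SQ.rand p => 0 < p ∧ p < 1

/-- A (non-tautological) clause: each variable occurs at most once, with
`some true` a positive and `some false` a negative literal. -/
abbrev Clause := ℕ → Option Bool

/-- The clause `c` is satisfied by assignment `σ`. -/
def clauseSat (c : Clause) (σ : ℕ → Bool) : Prop :=
  ∃ j : ℕ, ∃ b : Bool, c j = some b ∧ σ j = b

/-- `σ` agrees with the (unique) falsifying assignment of `c` on the variables of `c`. -/
def Falsifies (σ : ℕ → Bool) (c : Clause) : Prop :=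
  ∀ j : ℕ, ∀ b : Bool, c j = some b → σ j = !b

/-- Satisfaction of a CNF, given as a list of clauses. -/
def cnfSat (φ : List Clause) (σ : ℕ → Bool) : Prop :=
  ∀ c ∈ φ, clauseSat c σ

/-- Variable `j` occurs in the CNF `φ`. -/
def varsIn (φ : List Clause) (j : ℕ) : Prop :=
  ∃ c ∈ φ, c j ≠ none

/-- The formula `I` mentions only variables in `W`. -/
def VarsSubsetN (I : (ℕ → Bool) → Prop) (W : Set ℕ) : Prop :=
  ∀ σ τ : ℕ → Bool, (∀ v ∈ W, σ v = τ v) → (I σ ↔ I τ)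

/-- Interpolating S-resolution on the SSAT formula `Q : (A ∧ B)`: derivation of pairs
`(c^p, I)` of annotated clauses and intermediate interpolants.  The parameter `Allowed`
restricts the interpolants that may be chosen in rule R2'. -/
inductive ISRes (Q : List SQ) (A B : List Clause)
    (Allowed : ((ℕ → Bool) → Prop) → Prop) :
    Clause → ℝ → ((ℕ → Bool) → Prop) → Prop
  /-- R1' for a clause of `A`: interpolant `false`. -/
  | origA (c : Clause) (hc : c ∈ A) : ISRes Q A B Allowed c 0 (fun _ => False)
  /-- R1' for a clause of `B`: interpolant `true`. -/
  | origB (c : Clause) (hc : c ∈ B) : ISRes Q A B Allowed c 0 (fun _ => True)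
  /-- R2': any (allowed) formula over the common variables may serve as interpolant. -/
  | sat (c : Clause) (I : (ℕ → Bool) → Prop)
      (hvar : ∀ j : ℕ, ∀ b : Bool, c j = some b → j < Q.length)
      (h : ∀ σ : ℕ → Bool, Falsifies σ c → cnfSat (A ++ B) σ)
      (hIvars : VarsSubsetN I {j | varsIn A j ∧ varsIn B j})
      (hallow : Allowed I) :
      ISRes Q A B Allowed c 1 I
  /-- R3': resolution on the quantifier-maximal variable `x`, combining interpolants
  by `∨`, `∧`, or `(¬x ∨ I₁) ∧ (x ∨ I₂)` according to where `x` occurs. -/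
  | res (d₁ d₂ : Clause) (p₁ p₂ : ℝ) (x : ℕ) (q : SQ) (p : ℝ)
      (I₁ I₂ I : (ℕ → Bool) → Prop)
      (h₁ : ISRes Q A B Allowed d₁ p₁ I₁) (h₂ : ISRes Q A B Allowed d₂ p₂ I₂)
      (hx1 : d₁ x = some false) (hx2 : d₂ x = some true)
      (hq : Q[x]? = some q)
      (hmax : ∀ j : ℕ, j ≠ x → (d₁ j ≠ none ∨ d₂ j ≠ none) → j < x)
      (hcompat : ∀ j : ℕ, j ≠ x → ∀ b : Bool, d₁ j = some b → d₂ j ≠ some (!b))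
      (hp : p = match q with
        | SQ.ex => max p₁ p₂
        | SQ.rand px => px * p₁ + (1 - px) * p₂)
      (hI : (varsIn A x ∧ ¬ varsIn B x ∧ I = fun σ => I₁ σ ∨ I₂ σ)
          ∨ (¬ varsIn A x ∧ varsIn B x ∧ I = fun σ => I₁ σ ∧ I₂ σ)
          ∨ (varsIn A x ∧ varsIn B x ∧
              I = fun σ => (σ x = false ∨ I₁ σ) ∧ (σ x = true ∨ I₂ σ))) :
      ISRes Q A B Allowed (fun j => if j = x then none else (d₁ j <|> d₂ j)) p I

lemma falsifies_not_sat {c : Clause} {ρ : ℕ → Bool} (h : Falsifies ρ c) :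
    ¬ clauseSat c ρ := by
  rintro ⟨j, b, hc, hs⟩
  have := h j b hc
  rw [hs] at this
  cases b <;> exact absurd this (by decide)

lemma cnfSat_update {A : List Clause} {ρ : ℕ → Bool} {x : ℕ} (b : Bool)
    (hx : ¬ varsIn A x) : cnfSat A (Function.update ρ x b) ↔ cnfSat A ρ := by
  constructor <;> intro h c hc <;> obtain ⟨j, b', hj, hs⟩ := h c hc <;>
    have hjx : j ≠ x := fun he => hx ⟨c, hc, by rw [← he]; simp [hj]⟩
  · exact ⟨j, b', hj, by rwa [Function.update_of_ne hjx] at hs⟩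
  · exact ⟨j, b', hj, by rwa [Function.update_of_ne hjx]⟩

theorem isres_key (Q : List SQ) (A B : List Clause)
    (SAB : (ℕ → Bool) → Prop)
    (hS : ∀ σ : ℕ → Bool, SAB σ ↔
      ∃ σ' : ℕ → Bool,
        (∀ j : ℕ, ¬ ((varsIn A j ∧ ¬ varsIn B j) ∨ (varsIn B j ∧ ¬ varsIn A j)) →
          σ' j = σ j) ∧
        cnfSat A σ' ∧ cnfSat B σ')
    {c : Clause} {p : ℝ} {I : (ℕ → Bool) → Prop}
    (hder : ISRes Q A B (fun _ => True) c p I) :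
    VarsSubsetN I {j | varsIn A j ∧ varsIn B j} ∧
    ∀ ρ : ℕ → Bool, Falsifies ρ c →
      ((cnfSat A ρ → ¬ SAB ρ → I ρ) ∧ (I ρ → cnfSat B ρ → SAB ρ)) := by
  have hScongr : ∀ σ σ' : ℕ → Bool,
      (∀ j : ℕ, ¬ ((varsIn A j ∧ ¬ varsIn B j) ∨ (varsIn B j ∧ ¬ varsIn A j)) →
        σ' j = σ j) → (SAB σ ↔ SAB σ') := by
    intro σ σ' hag
    rw [hS, hS]
    constructor <;> rintro ⟨w, hw, hwA, hwB⟩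
    · exact ⟨w, fun j hj => (hw j hj).trans (hag j hj).symm, hwA, hwB⟩
    · exact ⟨w, fun j hj => (hw j hj).trans (hag j hj), hwA, hwB⟩
  induction hder with
  | origA c hc =>
    refine ⟨fun σ τ _ => Iff.rfl, fun ρ hρ => ⟨fun hA _ => ?_, fun h => h.elim⟩⟩
    exact (falsifies_not_sat hρ (hA c hc)).elim
  | origB c hc =>
    refine ⟨fun σ τ _ => Iff.rfl, fun ρ hρ => ⟨fun _ _ => trivial, fun _ hB => ?_⟩⟩
    exact (falsifies_not_sat hρ (hB c hc)).elim
  | sat c I hvar h hIvars _ =>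
    refine ⟨hIvars, fun ρ hρ => ?_⟩
    have hAB := h ρ hρ
    have hA : cnfSat A ρ := fun c' hc' => hAB c' (List.mem_append_left _ hc')
    have hB : cnfSat B ρ := fun c' hc' => hAB c' (List.mem_append_right _ hc')
    have hSAB : SAB ρ := (hS ρ).mpr ⟨ρ, fun _ _ => rfl, hA, hB⟩
    exact ⟨fun _ hn => absurd hSAB hn, fun _ _ => hSAB⟩
  | res d₁ d₂ p₁ p₂ x q p I₁ I₂ I h₁ h₂ hx1 hx2 hq hmax hcompat hp hI ih₁ ih₂ =>
    obtain ⟨hv₁, hr₁⟩ := ih₁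
    obtain ⟨hv₂, hr₂⟩ := ih₂
    -- falsification transfer
    have hF₁ : ∀ ρ : ℕ → Bool,
        Falsifies ρ (fun j => if j = x then none else (d₁ j <|> d₂ j)) →
        Falsifies (Function.update ρ x true) d₁ := by
      intro ρ hρ j b hj
      by_cases hjx : j = x
      · subst hjx
        rw [hx1] at hj
        simp at hj
        simp [← hj]
      · have hcj : (if j = x then none else (d₁ j <|> d₂ j)) = some b := by
          simp [hjx, hj]
        rw [Function.update_of_ne hjx]
        exact hρ j b hcj
    have hF₂ : ∀ ρ : ℕ → Bool,
        Falsifies ρ (fun j => if j = x then none else (d₁ j <|> d₂ j)) →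
        Falsifies (Function.update ρ x false) d₂ := by
      intro ρ hρ j b hj
      by_cases hjx : j = x
      · subst hjx
        rw [hx2] at hj
        simp at hj
        simp [← hj]
      · rw [Function.update_of_ne hjx]
        rcases h1 : d₁ j with _ | b'
        · exact hρ j b (by simp [hjx, h1, hj])
        · have hb : b = b' := by
            have h2 := hcompat j hjx b' h1
            rw [hj] at h2
            have h3 : b ≠ !b' := fun he => h2 (by rw [he])
            cases b <;> cases b' <;> revert h3 <;> decide
          subst hb
          exact hρ j b (by simp [hjx, h1])
    rcases hI with ⟨hAx, hBx, rfl⟩ | ⟨hAx, hBx, rfl⟩ | ⟨hAx, hBx, rfl⟩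
    · -- x only in A : I = I₁ ∨ I₂
      refine ⟨fun σ τ h => or_congr (hv₁ σ τ h) (hv₂ σ τ h), fun ρ hρ => ?_⟩
      have hFd₁ := hF₁ ρ hρ
      have hFd₂ := hF₂ ρ hρ
      have hSupd : ∀ b : Bool, SAB (Function.update ρ x b) ↔ SAB ρ := by
        intro b
        refine hScongr _ _ (fun j hj => ?_)
        have hjx : j ≠ x := fun he => hj (he ▸ Or.inl ⟨hAx, hBx⟩)
        rw [Function.update_of_ne hjx]
      have hI₁upd : ∀ b : Bool, I₁ (Function.update ρ x b) ↔ I₁ ρ := fun b =>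
        hv₁ _ ρ (fun v hv => Function.update_of_ne (fun he => hBx (by rw [← he]; exact hv.2)) _ _)
      have hBupd : ∀ b : Bool, cnfSat B (Function.update ρ x b) ↔ cnfSat B ρ :=
        fun b => cnfSat_update b hBx
      constructor
      · intro hA hnS
        rcases Bool.eq_false_or_eq_true (ρ x) with hx0 | hx0
        · have heq : Function.update ρ x true = ρ := by
            rw [← hx0]; exact Function.update_eq_self x ρ
          rw [heq] at hFd₁
          exact Or.inl ((hr₁ ρ hFd₁).1 hA hnS)
        · have heq : Function.update ρ x false = ρ := by
            rw [← hx0]; exact Function.update_eq_self x ρ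
          rw [heq] at hFd₂
          exact Or.inr ((hr₂ ρ hFd₂).1 hA hnS)
      · rintro (h1 | h2) hB
        · exact (hSupd true).mp
            ((hr₁ _ hFd₁).2 ((hI₁upd true).mpr h1) ((hBupd true).mpr hB))
        · have hI₂upd : I₂ (Function.update ρ x false) ↔ I₂ ρ :=
            hv₂ _ ρ (fun v hv => Function.update_of_ne (fun he => hBx (by rw [← he]; exact hv.2)) _ _)
          exact (hSupd false).mp
            ((hr₂ _ hFd₂).2 (hI₂upd.mpr h2) ((hBupd false).mpr hB))
    · -- x only in B : I = I₁ ∧ I₂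
      refine ⟨fun σ τ h => and_congr (hv₁ σ τ h) (hv₂ σ τ h), fun ρ hρ => ?_⟩
      have hFd₁ := hF₁ ρ hρ
      have hFd₂ := hF₂ ρ hρ
      have hSupd : ∀ b : Bool, SAB (Function.update ρ x b) ↔ SAB ρ := by
        intro b
        refine hScongr _ _ (fun j hj => ?_)
        have hjx : j ≠ x := fun he => hj (he ▸ Or.inr ⟨hBx, hAx⟩)
        rw [Function.update_of_ne hjx]
      have hI₁upd : ∀ b : Bool, I₁ (Function.update ρ x b) ↔ I₁ ρ := fun b =>
        hv₁ _ ρ (fun v hv => Function.update_of_ne (fun he => hAx (by rw [← he]; exact hv.1)) _ _)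
      have hI₂upd : ∀ b : Bool, I₂ (Function.update ρ x b) ↔ I₂ ρ := fun b =>
        hv₂ _ ρ (fun v hv => Function.update_of_ne (fun he => hAx (by rw [← he]; exact hv.1)) _ _)
      have hAupd : ∀ b : Bool, cnfSat A (Function.update ρ x b) ↔ cnfSat A ρ :=
        fun b => cnfSat_update b hAx
      constructor
      · intro hA hnS
        refine ⟨(hI₁upd true).mp ((hr₁ _ hFd₁).1 ((hAupd true).mpr hA)
            (fun hs => hnS ((hSupd true).mp hs))),
          (hI₂upd false).mp ((hr₂ _ hFd₂).1 ((hAupd false).mpr hA)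
            (fun hs => hnS ((hSupd false).mp hs)))⟩
      · rintro ⟨h1, h2⟩ hB
        rcases Bool.eq_false_or_eq_true (ρ x) with hx0 | hx0
        · have heq : Function.update ρ x true = ρ := by
            rw [← hx0]; exact Function.update_eq_self x ρ
          rw [heq] at hFd₁
          exact (hr₁ ρ hFd₁).2 h1 hB
        · have heq : Function.update ρ x false = ρ := by
            rw [← hx0]; exact Function.update_eq_self x ρ
          rw [heq] at hFd₂
          exact (hr₂ ρ hFd₂).2 h2 hB
    · -- x common : I = (¬x ∨ I₁) ∧ (x ∨ I₂)
      refine ⟨fun σ τ h => ?_, fun ρ hρ => ?_⟩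
      · have hx' : σ x = τ x := h x ⟨hAx, hBx⟩
        show (σ x = false ∨ I₁ σ) ∧ (σ x = true ∨ I₂ σ) ↔
          (τ x = false ∨ I₁ τ) ∧ (τ x = true ∨ I₂ τ)
        rw [hx']
        exact and_congr (or_congr Iff.rfl (hv₁ σ τ h)) (or_congr Iff.rfl (hv₂ σ τ h))
      have hFd₁ := hF₁ ρ hρ
      have hFd₂ := hF₂ ρ hρ
      constructor
      · intro hA hnS
        rcases Bool.eq_false_or_eq_true (ρ x) with hx0 | hx0
        · have heq : Function.update ρ x true = ρ := by
            rw [← hx0]; exact Function.update_eq_self x ρ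
          rw [heq] at hFd₁
          exact ⟨Or.inr ((hr₁ ρ hFd₁).1 hA hnS), Or.inl hx0⟩
        · have heq : Function.update ρ x false = ρ := by
            rw [← hx0]; exact Function.update_eq_self x ρ
          rw [heq] at hFd₂
          exact ⟨Or.inl hx0, Or.inr ((hr₂ ρ hFd₂).1 hA hnS)⟩
      · rintro ⟨hc1, hc2⟩ hB
        rcases Bool.eq_false_or_eq_true (ρ x) with hx0 | hx0
        · have heq : Function.update ρ x true = ρ := by
            rw [← hx0]; exact Function.update_eq_self x ρ
          rw [heq] at hFd₁
          exact (hr₁ ρ hFd₁).2 (hc1.resolve_left (by simp [hx0])) hB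
        · have heq : Function.update ρ x false = ρ := by
            rw [← hx0]; exact Function.update_eq_self x ρ
          rw [heq] at hFd₂
          exact (hr₂ ρ hFd₂).2 (hc2.resolve_left (by simp [hx0])) hB

theorem isres_invariant (Q : List SQ) (A B : List Clause) (c : Clause) (p : ℝ)
    (I SAB : (ℕ → Bool) → Prop) (i : ℕ)
    (hQ : ∀ q ∈ Q, q.valid)
    (hvars : ∀ c' ∈ A ++ B, ∀ j : ℕ, ∀ b : Bool, c' j = some b → j < Q.length)
    (hS : ∀ σ : ℕ → Bool, SAB σ ↔
      ∃ σ' : ℕ → Bool,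
        (∀ j : ℕ, ¬ ((varsIn A j ∧ ¬ varsIn B j) ∨ (varsIn B j ∧ ¬ varsIn A j)) →
          σ' j = σ j) ∧
        cnfSat A σ' ∧ cnfSat B σ')
    (hder : ISRes Q A B (fun _ => True) c p I)
    (hi : i ≤ Q.length)
    (hlt : ∀ j : ℕ, ∀ b : Bool, c j = some b → j < i)
    (hlast : i = 0 ∨ ∃ b : Bool, c (i - 1) = some b) :
    VarsSubsetN I {j | varsIn A j ∧ varsIn B j} ∧
    ∀ τ : ℕ → Bool, Falsifies τ c →
      (¬ ∃ σ : ℕ → Bool,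
          cnfSat A (fun j => if j < i then τ j else σ j) ∧
          ¬ SAB (fun j => if j < i then τ j else σ j) ∧
          ¬ I (fun j => if j < i then τ j else σ j)) ∧
      (¬ ∃ σ : ℕ → Bool,
          I (fun j => if j < i then τ j else σ j) ∧
          cnfSat B (fun j => if j < i then τ j else σ j) ∧
          ¬ SAB (fun j => if j < i then τ j else σ j)) := by
  have key := isres_key Q A B SAB hS hder
  refine ⟨key.1, fun τ hτ => ?_⟩
  constructor
  · rintro ⟨σ, hA, hnS, hnI⟩
    have hρ : Falsifies (fun j => if j < i then τ j else σ j) c := by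
      intro j b hj
      have := hlt j b hj
      simp only [this, if_pos]
      exact hτ j b hj
    exact hnI (((key.2 _ hρ).1) hA hnS)
  · rintro ⟨σ, hI, hB, hnS⟩
    have hρ : Falsifies (fun j => if j < i then τ j else σ j) c := by
      intro j b hj
      have := hlt j b hj
      simp only [this, if_pos]
      exact hτ j b hj
    exact hnS (((key.2 _ hρ).2) hI hB)
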